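/- arXiv:1005.3177 — 8 statements merged into one kernel-verified Lean document; each statement's English description precedes it below -/
import Mathlib

section
/- Let μ₁₂ be a probability vector on Fin a × Fin b and ν₂₃ a probability vector on Fin b × Fin c agreeing on the middle system, with common middle marginal μ₂(ε₂) = Σ_{ε₁} μ₁₂(ε₁, ε₂) = Σ_{ε₃} ν₂₃(ε₂, ε₃) assumed strictly positive for every ε₂. Define ρ₁₂₃(ε₁, ε₂, ε₃) := μ₁₂(ε₁, ε₂) ν₂₃(ε₂, ε₃) / μ₂(ε₂). Then ρ₁₂₃ is a probability vector whose marginals on the first two and last two factors are μ₁₂ and ν₂₃ respectively, and for every probability vector ξ₁₂₃ on Fin a × Fin b × Fin c with marginals μ₁₂ and ν₂₃ one has H(ξ₁₂₃) ≤ H(ρ₁₂₃), where H denotes the Shannon entropy. -/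
noncomputable def shannonEntropy {S : Type*} [Fintype S] (p : S → ℝ) : ℝ :=
  ∑ s, -(p s * Real.log (p s))

/-- The Markov extension of two overlapping probability vectors is a
probability vector with the correct marginals, and it has maximal Shannon entropy
among all joint extensions. -/
theorem markov_extension_maximal_entropy (a b c : ℕ)
    (μ : Fin a × Fin b → ℝ) (hμ0 : ∀ p, 0 ≤ μ p) (hμ1 : ∑ p, μ p = 1)
    (ν : Fin b × Fin c → ℝ) (hν0 : ∀ p, 0 ≤ ν p) (hν1 : ∑ p, ν p = 1)
    (μ₂ : Fin b → ℝ)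
    (hμ₂ : ∀ ε₂, μ₂ ε₂ = ∑ ε₁, μ (ε₁, ε₂))
    (hmid : ∀ ε₂, ∑ ε₁, μ (ε₁, ε₂) = ∑ ε₃, ν (ε₂, ε₃))
    (hpos : ∀ ε₂, 0 < μ₂ ε₂)
    (ρ : Fin a × Fin b × Fin c → ℝ)
    (hρ : ∀ ε₁ ε₂ ε₃, ρ (ε₁, ε₂, ε₃) = μ (ε₁, ε₂) * ν (ε₂, ε₃) / μ₂ ε₂) :
    ((∀ p, 0 ≤ ρ p) ∧ (∑ p, ρ p = 1) ∧
      (∀ ε₁ ε₂, ∑ ε₃, ρ (ε₁, ε₂, ε₃) = μ (ε₁, ε₂)) ∧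
      (∀ ε₂ ε₃, ∑ ε₁, ρ (ε₁, ε₂, ε₃) = ν (ε₂, ε₃))) ∧
    (∀ ξ : Fin a × Fin b × Fin c → ℝ,
      (∀ p, 0 ≤ ξ p) → (∑ p, ξ p = 1) →
      (∀ ε₁ ε₂, ∑ ε₃, ξ (ε₁, ε₂, ε₃) = μ (ε₁, ε₂)) →
      (∀ ε₂ ε₃, ∑ ε₁, ξ (ε₁, ε₂, ε₃) = ν (ε₂, ε₃)) →
      shannonEntropy ξ ≤ shannonEntropy ρ) := by
  have hν₂ : ∀ ε₂, μ₂ ε₂ = ∑ ε₃, ν (ε₂, ε₃) := fun ε₂ => (hμ₂ ε₂).trans (hmid ε₂)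
  have hρ0 : ∀ p, 0 ≤ ρ p := by
    rintro ⟨e1, e2, e3⟩
    rw [hρ]
    exact div_nonneg (mul_nonneg (hμ0 _) (hν0 _)) (hpos e2).le
  have hm12 : ∀ ε₁ ε₂, ∑ ε₃, ρ (ε₁, ε₂, ε₃) = μ (ε₁, ε₂) := by
    intro e1 e2
    simp only [hρ, div_eq_mul_inv, mul_assoc]
    rw [← Finset.mul_sum, ← Finset.sum_mul, ← hν₂ e2, mul_inv_cancel₀ (hpos e2).ne',
      mul_one]
  have hm23 : ∀ ε₂ ε₃, ∑ ε₁, ρ (ε₁, ε₂, ε₃) = ν (ε₂, ε₃) := by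
    intro e2 e3
    simp only [hρ, div_eq_mul_inv]
    rw [← Finset.sum_mul, ← Finset.sum_mul, ← hμ₂ e2]
    exact mul_div_cancel_left₀ _ (hpos e2).ne'
  have hρ1 : ∑ p, ρ p = 1 := by
    rw [Fintype.sum_prod_type, ← hμ1, Fintype.sum_prod_type]
    refine Finset.sum_congr rfl fun e1 _ => ?_
    rw [Fintype.sum_prod_type]
    exact Finset.sum_congr rfl fun e2 _ => hm12 e1 e2
  -- key sum identity
  have key : ∀ τ : Fin a × Fin b × Fin c → ℝ,
      (∀ ε₁ ε₂, ∑ ε₃, τ (ε₁, ε₂, ε₃) = μ (ε₁, ε₂)) →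
      (∀ ε₂ ε₃, ∑ ε₁, τ (ε₁, ε₂, ε₃) = ν (ε₂, ε₃)) →
      (∀ ε₁ ε₂ ε₃, τ (ε₁, ε₂, ε₃) ≠ 0 → 0 < μ (ε₁, ε₂) ∧ 0 < ν (ε₂, ε₃)) →
      ∑ p, -(τ p * Real.log (ρ p)) =
        (∑ q, -(μ q * Real.log (μ q))) + (∑ r, -(ν r * Real.log (ν r)))
          - ∑ e2, -(μ₂ e2 * Real.log (μ₂ e2)) := by
    intro τ h12 h23 hsupp
    have hpt : ∀ p : Fin a × Fin b × Fin c,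
        -(τ p * Real.log (ρ p)) =
          -(τ p * Real.log (μ (p.1, p.2.1))) + -(τ p * Real.log (ν (p.2.1, p.2.2)))
            - -(τ p * Real.log (μ₂ p.2.1)) := by
      rintro ⟨e1, e2, e3⟩
      by_cases h : τ (e1, e2, e3) = 0
      · simp [h]
      · obtain ⟨hμp, hνp⟩ := hsupp e1 e2 e3 h
        simp only [hρ]
        rw [Real.log_div (by positivity) (hpos e2).ne', Real.log_mul hμp.ne' hνp.ne']
        ring
    have T1 : ∑ p : Fin a × Fin b × Fin c, τ p * Real.log (μ (p.1, p.2.1))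
        = ∑ q : Fin a × Fin b, μ q * Real.log (μ q) := by
      simp only [Fintype.sum_prod_type]
      refine Finset.sum_congr rfl fun e1 _ => Finset.sum_congr rfl fun e2 _ => ?_
      rw [← Finset.sum_mul, h12]
    have T2 : ∑ p : Fin a × Fin b × Fin c, τ p * Real.log (ν (p.2.1, p.2.2))
        = ∑ r : Fin b × Fin c, ν r * Real.log (ν r) := by
      simp only [Fintype.sum_prod_type]
      rw [Finset.sum_comm]
      refine Finset.sum_congr rfl fun e2 _ => ?_
      rw [Finset.sum_comm]
      refine Finset.sum_congr rfl fun e3 _ => ?_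
      rw [← Finset.sum_mul, h23]
    have T3 : ∑ p : Fin a × Fin b × Fin c, τ p * Real.log (μ₂ p.2.1)
        = ∑ e2, μ₂ e2 * Real.log (μ₂ e2) := by
      simp only [Fintype.sum_prod_type]
      rw [Finset.sum_comm]
      refine Finset.sum_congr rfl fun e2 _ => ?_
      have : ∑ e1, ∑ e3, τ (e1, e2, e3) = μ₂ e2 := by
        rw [Finset.sum_comm]
        rw [Finset.sum_congr rfl fun e3 _ => h23 e2 e3, ← hν₂ e2]
      rw [← this, Finset.sum_mul]
      refine Finset.sum_congr rfl fun e1 _ => ?_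
      rw [Finset.sum_mul]
    calc ∑ p, -(τ p * Real.log (ρ p))
        = ∑ p : Fin a × Fin b × Fin c,
            (-(τ p * Real.log (μ (p.1, p.2.1))) + -(τ p * Real.log (ν (p.2.1, p.2.2)))
              - -(τ p * Real.log (μ₂ p.2.1))) := Finset.sum_congr rfl fun p _ => hpt p
      _ = _ := by
          rw [Finset.sum_sub_distrib, Finset.sum_add_distrib]
          simp only [Finset.sum_neg_distrib, T1, T2, T3]
  refine ⟨⟨hρ0, hρ1, hm12, hm23⟩, ?_⟩
  intro ξ hξ0 hξ1 h12 h23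
  have hsuppξ : ∀ ε₁ ε₂ ε₃, ξ (ε₁, ε₂, ε₃) ≠ 0 → 0 < μ (ε₁, ε₂) ∧ 0 < ν (ε₂, ε₃) := by
    intro e1 e2 e3 h
    have hpt : 0 < ξ (e1, e2, e3) := lt_of_le_of_ne (hξ0 _) (Ne.symm h)
    constructor
    · refine lt_of_lt_of_le hpt ?_
      rw [← h12 e1 e2]
      exact Finset.single_le_sum (fun i _ => hξ0 (e1, e2, i)) (Finset.mem_univ e3)
    · refine lt_of_lt_of_le hpt ?_
      rw [← h23 e2 e3]
      exact Finset.single_le_sum (fun i _ => hξ0 (i, e2, e3)) (Finset.mem_univ e1)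
  have hsuppρ : ∀ ε₁ ε₂ ε₃, ρ (ε₁, ε₂, ε₃) ≠ 0 → 0 < μ (ε₁, ε₂) ∧ 0 < ν (ε₂, ε₃) := by
    intro e1 e2 e3 h
    rw [hρ] at h
    have hμn : μ (e1, e2) ≠ 0 := fun h0 => h (by rw [h0]; simp)
    have hνn : ν (e2, e3) ≠ 0 := fun h0 => h (by rw [h0]; simp)
    exact ⟨lt_of_le_of_ne (hμ0 _) (Ne.symm hμn), lt_of_le_of_ne (hν0 _) (Ne.symm hνn)⟩
  -- Gibbs inequality pointwise
  have gibbs : ∀ p : Fin a × Fin b × Fin c,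
      -(ξ p * Real.log (ξ p)) ≤ -(ξ p * Real.log (ρ p)) + (ρ p - ξ p) := by
    rintro ⟨e1, e2, e3⟩
    by_cases h : ξ (e1, e2, e3) = 0
    · simp only [h, zero_mul, neg_zero, sub_zero, zero_add]
      exact hρ0 _
    · have hξp : 0 < ξ (e1, e2, e3) := lt_of_le_of_ne (hξ0 _) (Ne.symm h)
      obtain ⟨hμp, hνp⟩ := hsuppξ e1 e2 e3 h
      have hρp : 0 < ρ (e1, e2, e3) := by
        rw [hρ]; exact div_pos (mul_pos hμp hνp) (hpos e2)
      have hlog := Real.log_le_sub_one_of_pos (div_pos hρp hξp)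
      rw [Real.log_div hρp.ne' hξp.ne'] at hlog
      have hmul := mul_le_mul_of_nonneg_left hlog hξp.le
      have heq : ξ (e1, e2, e3) * (ρ (e1, e2, e3) / ξ (e1, e2, e3) - 1)
          = ρ (e1, e2, e3) - ξ (e1, e2, e3) := by field_simp
      rw [heq, mul_sub] at hmul
      linarith
  have h1 : shannonEntropy ξ ≤ ∑ p, -(ξ p * Real.log (ρ p)) := by
    have : ∑ p, -(ξ p * Real.log (ξ p)) ≤ ∑ p : Fin a × Fin b × Fin c, (-(ξ p * Real.log (ρ p)) + (ρ p - ξ p)) :=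
      Finset.sum_le_sum (fun p _ => gibbs p)
    rw [Finset.sum_add_distrib, Finset.sum_sub_distrib, hρ1, hξ1, sub_self, add_zero] at this
    exact this
  have h2 : (∑ p, -(ξ p * Real.log (ρ p))) = shannonEntropy ρ := by
    rw [key ξ h12 h23 hsuppξ, ← key ρ hm12 hm23 hsuppρ]
    rfl
  exact h2 ▸ h1
end

section
/- Let ρ₁₂ be a density matrix on ℂ^{d₁} ⊗ ℂ^{d₂}, realized as a positive semidefinite trace-one matrix indexed by (Fin d₁ × Fin d₂), and let ρ₁ and ρ₂ be its partial traces: ρ₁(i, i′) = Σ_k ρ₁₂((i,k),(i′,k)) and ρ₂(k, k′) = Σ_i ρ₁₂((i,k),(i,k′)). If ρ₁ is a pure state, i.e., ρ₁ is a rank-one orthogonal projection, then ρ₁₂ factorizes: ρ₁₂ = ρ₁ ⊗ ρ₂ (Kronecker product). -/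
open Kronecker
open scoped ComplexOrder

/-!
With `P = ρ₁ ⊗ 1`, an orthogonal projection, `tr (ρ P) = tr (ρ₁ ρ₁) = tr ρ₁ = tr ρ`, so
`tr (ρ (1 - P)) = 0`; for positive semidefinite `ρ` this forces `ρ (1 - P) = 0`, i.e.
`ρ = P ρ P`. Since the `2 × 2` minors of the rank-one `ρ₁` vanish,
`(ρ₁ ⊗ 1) M (ρ₁ ⊗ 1) = ρ₁ ⊗ tr₁ ((ρ₁ ⊗ 1) M)` for every `M` (`tr₁` tracing out the first
factor), and for `M = ρ` the second factor is `tr₁ (P ρ) = tr₁ ρ = ρ₂`.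
-/

namespace Matrix

theorem apply_mul_apply_eq_apply_mul_apply_of_rank_le_one {K m n : Type*} [Field K] [Fintype n]
    (A : Matrix m n K) (h : A.rank ≤ 1) (i k : m) (j l : n) :
    A i j * A k l = A i l * A k j := by
  classical
  obtain ⟨v, hv⟩ := finrank_le_one_iff.mp h
  have hcol : ∀ j, ∃ c : K, ∀ i, A i j = c * (v : m → K) i := by
    intro j
    obtain ⟨c, hc⟩ := hv ⟨A.mulVec (Pi.single j 1), LinearMap.mem_range_self _ _⟩
    refine ⟨c, fun i => ?_⟩
    simpa [mulVec_single, eq_comm] using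
      congrArg (fun w : LinearMap.range A.mulVecLin => (w : m → K) i) hc
  obtain ⟨cj, hj⟩ := hcol j
  obtain ⟨cl, hl⟩ := hcol l
  rw [hj i, hl k, hl i, hj k]
  ring

variable {R m n : Type*} [Fintype m] [Fintype n]

def partialTraceRight [AddCommMonoid R] (M : Matrix (m × n) (m × n) R) : Matrix m m R :=
  of fun i i' => ∑ k, M (i, k) (i', k)

def partialTraceLeft [AddCommMonoid R] (M : Matrix (m × n) (m × n) R) : Matrix n n R :=
  of fun k k' => ∑ i, M (i, k) (i, k')

theorem trace_partialTraceRight [AddCommMonoid R] (M : Matrix (m × n) (m × n) R) :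
    M.partialTraceRight.trace = M.trace := by
  simp [partialTraceRight, trace, Fintype.sum_prod_type]

section KroneckerOne

variable [DecidableEq n]

theorem kronecker_one_mul_apply [CommSemiring R] (Q : Matrix m m R)
    (M : Matrix (m × n) (m × n) R) (i j : m) (k l : n) :
    (Q ⊗ₖ (1 : Matrix n n R) * M) (i, k) (j, l) = ∑ a, Q i a * M (a, k) (j, l) := by
  simp [mul_apply, Fintype.sum_prod_type, one_apply]

theorem mul_kronecker_one_apply [CommSemiring R] (M : Matrix (m × n) (m × n) R)
    (Q : Matrix m m R) (i j : m) (k l : n) :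
    (M * Q ⊗ₖ (1 : Matrix n n R)) (i, k) (j, l) = ∑ b, M (i, k) (b, l) * Q b j := by
  simp [mul_apply, Fintype.sum_prod_type, one_apply]

theorem trace_mul_kronecker_one [CommSemiring R] (M : Matrix (m × n) (m × n) R)
    (Q : Matrix m m R) :
    (M * Q ⊗ₖ (1 : Matrix n n R)).trace = (M.partialTraceRight * Q).trace := by
  simp only [trace, diag, Fintype.sum_prod_type, mul_kronecker_one_apply]
  simp only [partialTraceRight, mul_apply, of_apply, Finset.sum_mul]
  exact Finset.sum_congr rfl fun _ _ => Finset.sum_comm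

theorem IsStarProjection.kronecker_one [CommRing R] [StarRing R] {Q : Matrix m m R}
    (hQ : IsStarProjection Q) : IsStarProjection (Q ⊗ₖ (1 : Matrix n n R)) :=
  (isStarProjection_iff' ..).mpr
    ⟨by rw [← mul_kronecker_mul, hQ.isIdempotentElem.eq, Matrix.one_mul],
      by rw [star_eq_conjTranspose, conjTranspose_kronecker, conjTranspose_one,
        ← star_eq_conjTranspose, hQ.isSelfAdjoint.star_eq]⟩

theorem kronecker_one_mul_mul_kronecker_one {K : Type*} [Field K] (Q : Matrix m m K)
    (hQ : Q.rank ≤ 1) (M : Matrix (m × n) (m × n) K) :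
    Q ⊗ₖ (1 : Matrix n n K) * M * Q ⊗ₖ (1 : Matrix n n K) =
      Q ⊗ₖ partialTraceLeft (Q ⊗ₖ (1 : Matrix n n K) * M) := by
  ext ⟨i, k⟩ ⟨i', k'⟩
  simp only [mul_kronecker_one_apply, kronecker_one_mul_apply, kronecker_apply,
    partialTraceLeft, of_apply, Finset.sum_mul, Finset.mul_sum]
  refine Finset.sum_congr rfl fun b _ => Finset.sum_congr rfl fun a _ => ?_
  linear_combination
    M (a, k) (b, k') * apply_mul_apply_eq_apply_mul_apply_of_rank_le_one Q hQ i b a i'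

end KroneckerOne

open scoped MatrixOrder in
theorem PosSemidef.mul_eq_zero_of_trace_mul_eq_zero {𝕜 : Type*} [RCLike 𝕜]
    {A B : Matrix n n 𝕜} (hA : A.PosSemidef) (hB : IsStarProjection B)
    (h : (A * B).trace = 0) : A * B = 0 := by
  classical
  obtain ⟨C, rfl⟩ := CStarAlgebra.nonneg_iff_eq_star_mul_self.mp hA.nonneg
  have hCB : C * B = 0 := by
    rw [← trace_conjTranspose_mul_self_eq_zero_iff, ← h]
    calc ((C * B)ᴴ * (C * B)).trace = (B * (star C * C * B)).trace := by
          rw [conjTranspose_mul, ← star_eq_conjTranspose B, hB.isSelfAdjoint.star_eq,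
            star_eq_conjTranspose]
          simp only [Matrix.mul_assoc]
      _ = (star C * C * B).trace := by
          rw [trace_mul_comm, Matrix.mul_assoc, hB.isIdempotentElem.eq]
  rw [Matrix.mul_assoc, hCB, Matrix.mul_zero]

end Matrix

open Matrix

theorem pure_marginal_factorizes_general (d₁ d₂ : ℕ)
    (ρ : Matrix (Fin d₁ × Fin d₂) (Fin d₁ × Fin d₂) ℂ)
    (hpsd : ρ.PosSemidef)
    (ρ₁ : Matrix (Fin d₁) (Fin d₁) ℂ)
    (hρ₁ : ∀ i i', ρ₁ i i' = ∑ k, ρ (i, k) (i', k))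
    (ρ₂ : Matrix (Fin d₂) (Fin d₂) ℂ)
    (hρ₂ : ∀ k k', ρ₂ k k' = ∑ i, ρ (i, k) (i, k'))
    (hpure : ρ₁.IsHermitian ∧ ρ₁ * ρ₁ = ρ₁ ∧ ρ₁.rank = 1) :
    ρ = ρ₁ ⊗ₖ ρ₂ := by
  obtain ⟨hherm, hproj, hrank⟩ := hpure
  have hρ₁ : ρ₁ = ρ.partialTraceRight := ext hρ₁
  have hρ₂ : ρ₂ = ρ.partialTraceLeft := ext hρ₂
  set P := ρ₁ ⊗ₖ (1 : Matrix (Fin d₂) (Fin d₂) ℂ)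
  have hP : IsStarProjection (1 - P) :=
    (IsStarProjection.kronecker_one ((isStarProjection_iff' ..).mpr ⟨hproj, hherm⟩)).one_sub
  have hρP : ρ * (1 - P) = 0 := by
    refine hpsd.mul_eq_zero_of_trace_mul_eq_zero hP ?_
    rw [Matrix.mul_sub, Matrix.mul_one, trace_sub, trace_mul_kronecker_one, ← hρ₁, hproj,
      hρ₁, trace_partialTraceRight, sub_self]
  have hPρ : (1 - P) * ρ = 0 := by
    simpa only [star_mul, hP.isSelfAdjoint.star_eq, star_eq_conjTranspose ρ, hpsd.isHermitian.eq,
      star_zero] using congrArg star hρP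
  rw [Matrix.mul_sub, Matrix.mul_one, sub_eq_zero] at hρP
  rw [Matrix.sub_mul, Matrix.one_mul, sub_eq_zero] at hPρ
  calc ρ = P * ρ * P := by rw [← hPρ, ← hρP]
    _ = ρ₁ ⊗ₖ ρ₂ := by rw [kronecker_one_mul_mul_kronecker_one ρ₁ hrank.le, ← hPρ, hρ₂]

/-- If the first partial trace of a bipartite density matrix is a pure
state (a rank-one orthogonal projection), then the density matrix factorizes as the
Kronecker product of its two partial traces. -/
theorem pure_marginal_factorizes (d₁ d₂ : ℕ)
    (ρ : Matrix (Fin d₁ × Fin d₂) (Fin d₁ × Fin d₂) ℂ)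
    (hpsd : ρ.PosSemidef) (htr : ρ.trace = 1)
    (ρ₁ : Matrix (Fin d₁) (Fin d₁) ℂ)
    (hρ₁ : ∀ i i', ρ₁ i i' = ∑ k, ρ (i, k) (i', k))
    (ρ₂ : Matrix (Fin d₂) (Fin d₂) ℂ)
    (hρ₂ : ∀ k k', ρ₂ k k' = ∑ i, ρ (i, k) (i, k'))
    (hpure : ρ₁.IsHermitian ∧ ρ₁ * ρ₁ = ρ₁ ∧ ρ₁.rank = 1) :
    ρ = ρ₁ ⊗ₖ ρ₂ :=
  pure_marginal_factorizes_general d₁ d₂ ρ hpsd ρ₁ hρ₁ ρ₂ hρ₂ hpure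
end

section
/- Let ρ₁₂ be a pure density matrix (rank-one orthogonal projection) on ℂ^{d₁} ⊗ ℂ^{d₂} and σ₂₃ a pure density matrix on ℂ^{d₂} ⊗ ℂ^{d₃}, agreeing on the middle system: the partial trace of ρ₁₂ over the first factor equals the partial trace of σ₂₃ over the third factor. If there exists a density matrix ρ₁₂₃ on ℂ^{d₁} ⊗ ℂ^{d₂} ⊗ ℂ^{d₃} whose partial trace over the third factor is ρ₁₂ and whose partial trace over the first factor is σ₂₃, then ρ₁₂ and σ₂₃ are product states: ρ₁₂ = ρ₁ ⊗ ρ₂ and σ₂₃ = ρ₂ ⊗ ρ₃ for pure density matrices ρ₁, ρ₂, ρ₃ on the respective factors. -/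
/-!
Write the extension as `ρ = Bᴴ * B`. Fixing the third index, the rows of `B` form a matrix `P`
whose Gram matrix `Pᴴ * P` is the marginal `ρ₁₂`; as `ρ₁₂` is a projection, `P * ρ₁₂ = P`, and
since `ρ₁₂ = c • |v⟩⟨v|` has rank one this says `B s (i, k, m) = C s m * v (i, k)`.
Symmetrically `B s (i, k, m) = E s i * w (k, m)` with `σ₂₃ = c' • |w⟩⟨w|`. Comparing the two
expressions at a nonzero entry of `B` splits `v (i, k) = f i * g k` and `w (k, m) = g' k * h m`,
so both states are Kronecker products of pure states, and the two middle factors coincide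
because each is the marginal on the middle system.
-/

open Kronecker
open scoped ComplexOrder

/-- A pure state: a rank-one orthogonal projection. -/
def IsPureState {m : Type*} [Fintype m] [DecidableEq m] (M : Matrix m m ℂ) : Prop :=
  M.IsHermitian ∧ M * M = M ∧ M.rank = 1

namespace Matrix

theorem trace_eq_rank_of_mul_self_eq {K n : Type*} [Field K] [Fintype n] [DecidableEq n]
    {M : Matrix n n K} (h : M * M = M) : M.trace = M.rank := by
  have hidem : IsIdempotentElem M.toLin' := by
    rw [IsIdempotentElem, Module.End.mul_eq_comp, ← toLin'_mul, h]
  rw [← trace_toLin'_eq, (LinearMap.IsIdempotentElem.isProj_range _ hidem).trace]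
  rfl

theorem exists_eq_vecMulVec_of_rank_eq_one {K m n : Type*} [Field K] [Fintype n]
    {M : Matrix m n K} (h : M.rank = 1) : ∃ (a : m → K) (b : n → K), M = vecMulVec a b := by
  classical
  rw [rank, finrank_eq_one_iff'] at h
  obtain ⟨⟨a, ha⟩, -, hspan⟩ := h
  choose b hb using fun j => hspan ⟨M.col j, Pi.single j 1, by simp⟩
  refine ⟨a, b, ext fun i j => ?_⟩
  simpa [mul_comm, vecMulVec_apply] using (congrFun (congrArg Subtype.val (hb j)) i).symm

theorem PosSemidef.exists_eq_conjTranspose_mul_self {𝕜 n : Type*} [RCLike 𝕜] [Fintype n]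
    {A : Matrix n n 𝕜} (hA : A.PosSemidef) : ∃ B : Matrix n n 𝕜, A = Bᴴ * B := by
  classical
  open scoped MatrixOrder in exact CStarAlgebra.nonneg_iff_eq_star_mul_self.mp hA.nonneg

theorem mul_eq_self_of_conjTranspose_mul_self_mul_eq {𝕜 m n : Type*} [RCLike 𝕜] [Fintype m]
    [Fintype n] [DecidableEq n] {P : Matrix m n 𝕜} {Q : Matrix n n 𝕜}
    (h : Pᴴ * P * Q = Pᴴ * P) : P * Q = P := by
  have hPQ : P * Q - P = P * (Q - 1) := by rw [Matrix.mul_sub, Matrix.mul_one]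
  rw [← sub_eq_zero, ← conjTranspose_mul_self_eq_zero, hPQ, conjTranspose_mul, Matrix.mul_assoc,
    ← Matrix.mul_assoc Pᴴ, Matrix.mul_sub, Matrix.mul_one, h, sub_self, Matrix.mul_zero]

theorem sum_kronecker_apply_fst {R l m : Type*} [CommSemiring R] [Fintype l]
    (A : Matrix l l R) (B : Matrix m m R) (k k' : m) :
    ∑ i, (A ⊗ₖ B) (i, k) (i, k') = A.trace * B k k' := by
  simp [kroneckerMap_apply, trace, Finset.sum_mul]

theorem sum_kronecker_apply_snd {R l m : Type*} [CommSemiring R] [Fintype l]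
    (A : Matrix m m R) (B : Matrix l l R) (k k' : m) :
    ∑ i, (A ⊗ₖ B) (k, i) (k', i) = B.trace * A k k' := by
  simp [kroneckerMap_apply, trace, Finset.mul_sum, mul_comm]

end Matrix

open Matrix

section PureState

variable {n : Type*} [Fintype n] [DecidableEq n]

theorem IsPureState.trace_eq_one {M : Matrix n n ℂ} (h : IsPureState M) : M.trace = 1 := by
  rw [trace_eq_rank_of_mul_self_eq h.2.1, h.2.2, Nat.cast_one]

theorem isPureState_iff_trace_eq_one {M : Matrix n n ℂ} :
    IsPureState M ↔ M.IsHermitian ∧ M * M = M ∧ M.trace = 1 := by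
  refine and_congr_right fun _ => and_congr_right fun hidem => ?_
  rw [trace_eq_rank_of_mul_self_eq hidem, Nat.cast_eq_one]

theorem isPureState_smul_vecMulVec {c : ℂ} {v : n → ℂ} (hcv : c * (star v ⬝ᵥ v) = 1) :
    IsPureState (c • vecMulVec (star v) v) := by
  have hc : star c = c := by
    rw [eq_inv_of_mul_eq_one_left hcv, star_inv₀, ← star_dotProduct]
  refine isPureState_iff_trace_eq_one.mpr ⟨?_, ?_, ?_⟩
  · rw [IsHermitian, conjTranspose_smul, conjTranspose_vecMulVec, star_star, hc]
  · rw [smul_mul_smul_comm, vecMulVec_mul_vecMulVec, vecMulVec_smul, smul_smul, mul_assoc,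
      dotProduct_comm, hcv, mul_one]
  · rw [trace_smul, trace_vecMulVec, smul_eq_mul, hcv]

/-- The normalisation sits in the scalar `c` rather than in `v`, so no square roots are needed. -/
theorem IsPureState.exists_smul_vecMulVec {M : Matrix n n ℂ} (h : IsPureState M) :
    ∃ (c : ℂ) (v : n → ℂ), c * (star v ⬝ᵥ v) = 1 ∧ M = c • vecMulVec (star v) v := by
  obtain ⟨hherm, hidem, hrank⟩ := h
  obtain ⟨a, b, rfl⟩ := exists_eq_vecMulVec_of_rank_eq_one hrank
  have hM : vecMulVec a b = (star a ⬝ᵥ a) • vecMulVec (star b) b := by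
    conv_lhs => rw [← hidem]; enter [1]; rw [← hherm]
    rw [conjTranspose_vecMulVec, vecMulVec_mul_vecMulVec, vecMulVec_smul]
  refine ⟨star a ⬝ᵥ a, b, ?_, hM⟩
  have htr := IsPureState.trace_eq_one ⟨hherm, hidem, hrank⟩
  rwa [hM, trace_smul, trace_vecMulVec, smul_eq_mul] at htr

theorem exists_isPureState_kronecker_of_apply_eq_mul {ι κ : Type*} [Fintype ι] [DecidableEq ι]
    [Fintype κ] [DecidableEq κ] {c : ℂ} {v : ι × κ → ℂ} (hcv : c * (star v ⬝ᵥ v) = 1)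
    {f : ι → ℂ} {g : κ → ℂ} (hv : ∀ i k, v (i, k) = f i * g k) :
    ∃ (A : Matrix ι ι ℂ) (B : Matrix κ κ ℂ), IsPureState A ∧ IsPureState B ∧
      c • vecMulVec (star v) v = A ⊗ₖ B := by
  have hnorm : star v ⬝ᵥ v = (star f ⬝ᵥ f) * (star g ⬝ᵥ g) := by
    simp only [dotProduct, Fintype.sum_prod_type, Finset.sum_mul_sum, Pi.star_apply, hv,
      star_mul']
    exact Finset.sum_congr rfl fun _ _ => Finset.sum_congr rfl fun _ _ => by ring
  rw [hnorm] at hcv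
  refine ⟨(c * (star g ⬝ᵥ g)) • vecMulVec (star f) f, (c * (star f ⬝ᵥ f)) • vecMulVec (star g) g,
    isPureState_smul_vecMulVec (by linear_combination hcv),
    isPureState_smul_vecMulVec (by linear_combination hcv), ?_⟩
  ext ⟨i, k⟩ ⟨i', k'⟩
  simp only [Matrix.smul_apply, vecMulVec_apply, kroneckerMap_apply, Pi.star_apply, hv, star_mul',
    smul_eq_mul]
  linear_combination -(c * star (f i) * star (g k) * (f i' * g k')) * hcv

theorem exists_eq_mul_of_sum_conjTranspose_mul_self_eq {S X o : Type*} [Fintype S] [Fintype o]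
    (B : Matrix S X ℂ) (e : n → o → X) {c : ℂ} {v : n → ℂ} (hcv : c * (star v ⬝ᵥ v) = 1)
    (h : ∀ x y, ∑ m, (Bᴴ * B) (e x m) (e y m) = (c • vecMulVec (star v) v) x y) :
    ∃ C : S → o → ℂ, ∀ s x m, B s (e x m) = C s m * v x := by
  let P : Matrix (S × o) n ℂ := of fun p x => B p.1 (e x p.2)
  have hP : Pᴴ * P = c • vecMulVec (star v) v := by
    ext x y
    rw [← h, mul_apply, Fintype.sum_prod_type, Finset.sum_comm]
    simp [P, mul_apply]
  have hPM : P * (c • vecMulVec (star v) v) = P :=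
    mul_eq_self_of_conjTranspose_mul_self_mul_eq (by rw [hP, (isPureState_smul_vecMulVec hcv).2.1])
  refine ⟨fun s m => c * (P *ᵥ star v) (s, m), fun s x m => ?_⟩
  have hrow := congrFun (congrFun hPM (s, m)) x
  rw [Matrix.mul_smul, mul_vecMulVec] at hrow
  simpa [P, vecMulVec_apply, mul_assoc] using hrow.symm

end PureState

theorem exists_mul_of_mul_eq_mul {K ι κ μ : Type*} [Field K] {a : ι → κ → K} {b : κ → μ → K}
    {C : μ → K} {E : ι → K} (h : ∀ i k m, C m * a i k = E i * b k m)
    (hne : ∃ i k m, C m * a i k ≠ 0) :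
    (∃ (f : ι → K) (g : κ → K), ∀ i k, a i k = f i * g k) ∧
      ∃ (g : κ → K) (f : μ → K), ∀ k m, b k m = g k * f m := by
  obtain ⟨i₀, k₀, m₀, hne⟩ := hne
  have hC : C m₀ ≠ 0 := left_ne_zero_of_mul hne
  have hE : E i₀ ≠ 0 := left_ne_zero_of_mul (h i₀ k₀ m₀ ▸ hne)
  refine ⟨⟨fun i => E i / C m₀, fun k => b k m₀, fun i k => ?_⟩,
    ⟨fun k => a i₀ k, fun m => C m / E i₀, fun k m => ?_⟩⟩
  · field_simp
    linear_combination h i k m₀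
  · field_simp
    linear_combination -h i₀ k m

/-- If two pure bipartite density matrices agree on the middle system and
admit a joint extension to the three-partite system, then both are product states built
from pure states on the individual factors. -/
theorem pure_overlapping_extension_product (d₁ d₂ d₃ : ℕ)
    (ρ12 : Matrix (Fin d₁ × Fin d₂) (Fin d₁ × Fin d₂) ℂ) (h12 : IsPureState ρ12)
    (σ23 : Matrix (Fin d₂ × Fin d₃) (Fin d₂ × Fin d₃) ℂ) (h23 : IsPureState σ23)
    (hmid : ∀ k k' : Fin d₂, (∑ i, ρ12 (i, k) (i, k')) = ∑ m, σ23 (k, m) (k', m))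
    (hext : ∃ ρ : Matrix (Fin d₁ × Fin d₂ × Fin d₃) (Fin d₁ × Fin d₂ × Fin d₃) ℂ,
      ρ.PosSemidef ∧ ρ.trace = 1 ∧
      (∀ i k i' k', (∑ m, ρ (i, k, m) (i', k', m)) = ρ12 (i, k) (i', k')) ∧
      (∀ k m k' m', (∑ i, ρ (i, k, m) (i, k', m')) = σ23 (k, m) (k', m'))) :
    ∃ (ρ₁ : Matrix (Fin d₁) (Fin d₁) ℂ) (ρ₂ : Matrix (Fin d₂) (Fin d₂) ℂ)
      (ρ₃ : Matrix (Fin d₃) (Fin d₃) ℂ),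
      IsPureState ρ₁ ∧ IsPureState ρ₂ ∧ IsPureState ρ₃ ∧
      ρ12 = ρ₁ ⊗ₖ ρ₂ ∧ σ23 = ρ₂ ⊗ₖ ρ₃ := by
  obtain ⟨ρ, hρ, htr, h3, h1⟩ := hext
  obtain ⟨B, rfl⟩ := hρ.exists_eq_conjTranspose_mul_self
  obtain ⟨c, v, hcv, rfl⟩ := h12.exists_smul_vecMulVec
  obtain ⟨c', w, hcw, rfl⟩ := h23.exists_smul_vecMulVec
  obtain ⟨C, hC⟩ := exists_eq_mul_of_sum_conjTranspose_mul_self_eq B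
    (fun (x : Fin d₁ × Fin d₂) m => (x.1, x.2, m)) hcv fun x y => h3 x.1 x.2 y.1 y.2
  obtain ⟨E, hE⟩ := exists_eq_mul_of_sum_conjTranspose_mul_self_eq B
    (fun (y : Fin d₂ × Fin d₃) i => (i, y.1, y.2)) hcw fun x y => h1 x.1 x.2 y.1 y.2
  obtain ⟨s, x, hx⟩ : ∃ s x, B s x ≠ 0 := by
    by_contra! hB
    simp [show B = 0 from ext hB] at htr
  obtain ⟨⟨f₁, f₂, hv⟩, ⟨g₂, g₃, hw⟩⟩ := exists_mul_of_mul_eq_mul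
    (a := fun i k => v (i, k)) (b := fun k m => w (k, m))
    (fun i k m => (hC s (i, k) m).symm.trans (hE s (k, m) i))
    ⟨x.1, x.2.1, x.2.2, hC s (x.1, x.2.1) x.2.2 ▸ hx⟩
  obtain ⟨ρ₁, ρ₂, h₁, h₂, hρ12⟩ := exists_isPureState_kronecker_of_apply_eq_mul hcv hv
  obtain ⟨ρ₂', ρ₃, -, h₃, hσ23⟩ := exists_isPureState_kronecker_of_apply_eq_mul hcw hw
  have hρ₂ : ρ₂ = ρ₂' := ext fun k k' => by
    have hk := hmid k k'
    rwa [hρ12, hσ23, sum_kronecker_apply_fst, sum_kronecker_apply_snd, h₁.trace_eq_one,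
      h₃.trace_eq_one, one_mul, one_mul] at hk
  exact ⟨ρ₁, ρ₂, ρ₃, h₁, h₂, h₃, hρ12, hρ₂ ▸ hσ23⟩
end

section
/- Let 𝕡 be the 4×4 orthogonal projection onto the singlet vector (|10⟩ − |01⟩)/√2 in ℂ² ⊗ ℂ². Then for every separable two-qubit density matrix ρ, i.e., ρ = Σ_i λ_i ρ_i ⊗ σ_i a finite convex combination of Kronecker products of 2×2 density matrices, one has tr(ρ 𝕡) ≤ 1/2; moreover the bound 1/2 is attained, e.g. by ρ = ½ |e₀⟩⟨e₀| ⊗ |e₁⟩⟨e₁| + ½ |e₁⟩⟨e₁| ⊗ |e₀⟩⟨e₀| for an orthonormal basis {e₀, e₁} of ℂ². -/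
open Kronecker
open Matrix
open scoped ComplexOrder

/-- The Pauli matrix `σ_x`. -/
def pauliX : Matrix (Fin 2) (Fin 2) ℂ := !![0, 1; 1, 0]
/-- The Pauli matrix `σ_y`. -/
def pauliY : Matrix (Fin 2) (Fin 2) ℂ := !![0, -Complex.I; Complex.I, 0]
/-- The Pauli matrix `σ_z`. -/
def pauliZ : Matrix (Fin 2) (Fin 2) ℂ := !![1, 0; 0, -1]

/-- The orthogonal projection onto the singlet vector `(|10⟩ − |01⟩)/√2` in `ℂ² ⊗ ℂ²`,
`𝕡 = ¼(𝟙₄ − σ_x⊗σ_x − σ_y⊗σ_y − σ_z⊗σ_z)`. -/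
noncomputable def singletProj : Matrix (Fin 2 × Fin 2) (Fin 2 × Fin 2) ℂ :=
  (1/4 : ℂ) • ((1 : Matrix (Fin 2 × Fin 2) (Fin 2 × Fin 2) ℂ)
    - pauliX ⊗ₖ pauliX - pauliY ⊗ₖ pauliY - pauliZ ⊗ₖ pauliZ)

/-- A density matrix: positive semidefinite with trace one. -/
def IsDensityMatrix {m : Type*} [Fintype m] [DecidableEq m] (M : Matrix m m ℂ) : Prop :=
  M.PosSemidef ∧ M.trace = 1

/-- A separable two-qubit density matrix: a finite convex combination of Kronecker
products of single-qubit density matrices. -/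
def SeparableTwoQubit (ρ : Matrix (Fin 2 × Fin 2) (Fin 2 × Fin 2) ℂ) : Prop :=
  ∃ (n : ℕ) (c : Fin n → ℝ) (σ τ : Fin n → Matrix (Fin 2) (Fin 2) ℂ),
    (∀ i, 0 ≤ c i) ∧ (∑ i, c i = 1) ∧
    (∀ i, IsDensityMatrix (σ i)) ∧ (∀ i, IsDensityMatrix (τ i)) ∧
    ρ = ∑ i, (c i : ℂ) • (σ i ⊗ₖ τ i)

lemma key (σ τ : Matrix (Fin 2) (Fin 2) ℂ) :
    ((σ ⊗ₖ τ) * singletProj).trace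
      = (1/4 : ℂ) * (σ.trace * τ.trace - (σ * pauliX).trace * (τ * pauliX).trace
          - (σ * pauliY).trace * (τ * pauliY).trace
          - (σ * pauliZ).trace * (τ * pauliZ).trace) := by
  rw [singletProj, ← Matrix.one_kronecker_one (m := Fin 2) (n := Fin 2)]
  rw [Matrix.mul_smul, mul_sub, mul_sub, mul_sub, ← Matrix.mul_kronecker_mul,
    ← Matrix.mul_kronecker_mul, ← Matrix.mul_kronecker_mul, ← Matrix.mul_kronecker_mul,
    Matrix.trace_smul, Matrix.trace_sub, Matrix.trace_sub, Matrix.trace_sub,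
    Matrix.trace_kronecker, Matrix.trace_kronecker, Matrix.trace_kronecker,
    Matrix.trace_kronecker, Matrix.mul_one, Matrix.mul_one]
  simp [smul_eq_mul]

lemma bloch (σ : Matrix (Fin 2) (Fin 2) ℂ) (h : IsDensityMatrix σ) :
    ∃ x y z : ℝ, x^2 + y^2 + z^2 ≤ 1 ∧ (σ * pauliX).trace = (x:ℂ)
      ∧ (σ * pauliY).trace = (y:ℂ) ∧ (σ * pauliZ).trace = (z:ℂ) := by
  obtain ⟨hpsd, htr⟩ := h
  have hherm := hpsd.isHermitian
  have h10 : σ 1 0 = starRingEnd ℂ (σ 0 1) := by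
    have := congrFun (congrFun hherm 1) 0
    simpa [Matrix.conjTranspose_apply, eq_comm] using this.symm
  have h00 : (σ 0 0).im = 0 := by
    have := congrFun (congrFun hherm 0) 0
    have := congrArg Complex.im this
    simp [Matrix.conjTranspose_apply, Complex.conj_im] at this
    linarith
  have h11 : (σ 1 1).im = 0 := by
    have := congrFun (congrFun hherm 1) 1
    have := congrArg Complex.im this
    simp [Matrix.conjTranspose_apply, Complex.conj_im] at this
    linarith
  have htr' : (σ 0 0).re + (σ 1 1).re = 1 := by
    have := congrArg Complex.re htr
    simpa [Matrix.trace, Matrix.diag, Fin.sum_univ_two] using this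
  -- determinant nonnegative
  have hdet : ∃ d : ℝ, 0 ≤ d ∧ σ.det = (d:ℂ) := by
    refine ⟨∏ i, hherm.eigenvalues i, Finset.prod_nonneg fun i _ => hpsd.eigenvalues_nonneg i, ?_⟩
    rw [hherm.det_eq_prod_eigenvalues]
    push_cast
    rfl
  obtain ⟨d, hd0, hd⟩ := hdet
  have hdet2 : σ 0 0 * σ 1 1 - σ 0 1 * σ 1 0 = (d:ℂ) := by
    rw [← hd, Matrix.det_fin_two]
  have hq : (σ 0 0).re * (σ 1 1).re - ((σ 0 1).re^2 + (σ 0 1).im^2) = d := by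
    have := congrArg Complex.re hdet2
    simp [h10, Complex.mul_re, Complex.conj_re, Complex.conj_im, h00, h11] at this
    linarith [this]
  refine ⟨2 * (σ 0 1).re, -2 * (σ 0 1).im, (σ 0 0).re - (σ 1 1).re, ?_, ?_, ?_, ?_⟩
  · nlinarith [hd0, hq, htr']
  · have : (σ * pauliX).trace = σ 0 1 + σ 1 0 := by
      simp [Matrix.trace, Matrix.diag, Matrix.mul_apply, Fin.sum_univ_two, pauliX]
    rw [this, h10]
    apply Complex.ext <;> simp [Complex.conj_re, Complex.conj_im] <;> ring
  · have : (σ * pauliY).trace = Complex.I * (σ 0 1 - σ 1 0) := by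
      simp [Matrix.trace, Matrix.diag, Matrix.mul_apply, Fin.sum_univ_two, pauliY]
      ring
    rw [this, h10]
    apply Complex.ext <;> simp [Complex.conj_re, Complex.conj_im] <;> ring
  · have : (σ * pauliZ).trace = σ 0 0 - σ 1 1 := by
      simp [Matrix.trace, Matrix.diag, Matrix.mul_apply, Fin.sum_univ_two, pauliZ]
      ring
    rw [this]
    apply Complex.ext <;> simp [h00, h11]

lemma term_bound (σ τ : Matrix (Fin 2) (Fin 2) ℂ) (hσ : IsDensityMatrix σ)
    (hτ : IsDensityMatrix τ) : (((σ ⊗ₖ τ) * singletProj).trace).re ≤ 1/2 := by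
  obtain ⟨x, y, z, hxyz, hx, hy, hz⟩ := bloch σ hσ
  obtain ⟨x', y', z', hxyz', hx', hy', hz'⟩ := bloch τ hτ
  rw [key, hσ.2, hτ.2, hx, hy, hz, hx', hy', hz']
  have : ((1/4 : ℂ) * ((1:ℂ) * 1 - (x:ℂ) * x' - (y:ℂ) * y' - (z:ℂ) * z')).re
      = (1/4 : ℝ) * (1 - x * x' - y * y' - z * z') := by
    push_cast
    norm_num [Complex.mul_re, Complex.sub_re]
  rw [this]
  nlinarith [sq_nonneg (x + x'), sq_nonneg (y + y'), sq_nonneg (z + z'), hxyz, hxyz']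

lemma part1 (ρ : Matrix (Fin 2 × Fin 2) (Fin 2 × Fin 2) ℂ) (h : SeparableTwoQubit ρ) :
    ((ρ * singletProj).trace).re ≤ 1/2 := by
  obtain ⟨n, c, σ, τ, hc, hsum, hσ, hτ, rfl⟩ := h
  rw [Finset.sum_mul, Matrix.trace_sum]
  have : ∀ i : Fin n, ((((c i : ℂ) • (σ i ⊗ₖ τ i)) * singletProj).trace).re
      ≤ c i * (1/2) := by
    intro i
    rw [Matrix.smul_mul, Matrix.trace_smul]
    have : ((c i : ℂ) • ((σ i ⊗ₖ τ i) * singletProj).trace).re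
        = c i * ((((σ i ⊗ₖ τ i)) * singletProj).trace).re := by
      simp [Complex.smul_re]
    rw [this]
    exact mul_le_mul_of_nonneg_left (term_bound _ _ (hσ i) (hτ i)) (hc i)
  calc (∑ i, (((c i : ℂ) • (σ i ⊗ₖ τ i)) * singletProj).trace).re
      = ∑ i, ((((c i : ℂ) • (σ i ⊗ₖ τ i)) * singletProj).trace).re := by
        rw [Complex.re_sum]
    _ ≤ ∑ i, c i * (1/2) := Finset.sum_le_sum fun i _ => this i
    _ = 1/2 := by rw [← Finset.sum_mul, hsum, one_mul]

lemma dens_pure (v : Fin 2 → ℂ) (hv : (∑ i, starRingEnd ℂ (v i) * v i) = 1) :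
    IsDensityMatrix (vecMulVec v (star v)) := by
  constructor
  · rw [Matrix.vecMulVec_eq Unit, ← Matrix.conjTranspose_replicateCol]
    exact Matrix.posSemidef_self_mul_conjTranspose _
  · rw [← hv]
    simp [Matrix.trace, Matrix.diag, Matrix.vecMulVec_apply, Fin.sum_univ_two,
      Pi.star_apply, mul_comm]

lemma pure_cross (e₀ e₁ : Fin 2 → ℂ)
    (h0 : (∑ i, starRingEnd ℂ (e₀ i) * e₀ i) = 1)
    (h1 : (∑ i, starRingEnd ℂ (e₁ i) * e₁ i) = 1)
    (h01 : (∑ i, starRingEnd ℂ (e₀ i) * e₁ i) = 0) :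
    ((vecMulVec e₀ (star e₀) ⊗ₖ vecMulVec e₁ (star e₁)) * singletProj).trace = 1/2 := by
  have h01' : (∑ i, e₀ i * starRingEnd ℂ (e₁ i)) = 0 := by
    have := congrArg (starRingEnd ℂ) h01
    simpa [map_sum, mul_comm] using this
  rw [Fin.sum_univ_two] at h0 h1 h01 h01'
  rw [key]
  simp only [Matrix.trace, Matrix.diag, Matrix.mul_apply, Fin.sum_univ_two,
    Matrix.vecMulVec_apply, Pi.star_apply, pauliX, pauliY, pauliZ,
    Matrix.cons_val', Matrix.cons_val_zero, Matrix.cons_val_one, Matrix.head_cons,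
    Matrix.empty_val', Matrix.cons_val_fin_one, Matrix.head_fin_const,
    Matrix.of_apply, Complex.star_def]
  set a := e₀ 0; set b := e₀ 1; set c := e₁ 0; set d := e₁ 1
  set a' := starRingEnd ℂ (e₀ 0); set b' := starRingEnd ℂ (e₀ 1)
  set c' := starRingEnd ℂ (e₁ 0); set d' := starRingEnd ℂ (e₁ 1)
  have f1 : a*b'*(d*c') = -(b*b'*(d*d')) := by linear_combination (b'*d) * h01'
  have f2 : a'*b*(c*d') = -(b*b'*(d*d')) := by linear_combination (b*d') * h01
  have f3 : a*a'*(c*c') = b*b'*(d*d') := by linear_combination (a*c')*h01 - f1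
  have f4 : a*a' + c*c' = 1 := by linear_combination f3 + (d*d')*h0 + (1 - a*a')*h1
  have g1 : b*b' + d*d' = 1 := by linear_combination h0 + h1 - f4
  linear_combination (1/4)*(c*c'+d*d')*h0 + (1/4)*h1
    - (1/4)*(((a*b'-b*a')*(c*d'-d*c'))*Complex.I_sq + 2*f1 + 2*f2
        + (c*c'-d*d')*h0 + (1-2*(b*b'))*h1 - 2*g1)

/-- The equal-weight Néel mixture `½ |e₀⟩⟨e₀| ⊗ |e₁⟩⟨e₁| + ½ |e₁⟩⟨e₁| ⊗ |e₀⟩⟨e₀|`. -/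
noncomputable def neelState (e₀ e₁ : Fin 2 → ℂ) :
    Matrix (Fin 2 × Fin 2) (Fin 2 × Fin 2) ℂ :=
  (1/2 : ℂ) • (vecMulVec e₀ (star e₀) ⊗ₖ vecMulVec e₁ (star e₁))
    + (1/2 : ℂ) • (vecMulVec e₁ (star e₁) ⊗ₖ vecMulVec e₀ (star e₀))

/-- The expectation of the singlet projector in any separable two-qubit
density matrix is at most `1/2`, and the bound is attained by the equal-weight mixture
`½ |e₀⟩⟨e₀| ⊗ |e₁⟩⟨e₁| + ½ |e₁⟩⟨e₁| ⊗ |e₀⟩⟨e₀|` for any orthonormal basis `{e₀, e₁}`. -/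
theorem singlet_expectation_separable :
    (∀ ρ : Matrix (Fin 2 × Fin 2) (Fin 2 × Fin 2) ℂ, SeparableTwoQubit ρ →
      ((ρ * singletProj).trace).re ≤ 1/2) ∧
    (∀ e₀ e₁ : Fin 2 → ℂ,
      (∑ i, starRingEnd ℂ (e₀ i) * e₀ i) = 1 →
      (∑ i, starRingEnd ℂ (e₁ i) * e₁ i) = 1 →
      (∑ i, starRingEnd ℂ (e₀ i) * e₁ i) = 0 →
      SeparableTwoQubit (neelState e₀ e₁) ∧
        (neelState e₀ e₁ * singletProj).trace = 1/2) := by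
  refine ⟨part1, fun e₀ e₁ h0 h1 h01 => ⟨?_, ?_⟩⟩
  · refine ⟨2, ![1/2, 1/2],
      ![vecMulVec e₀ (star e₀), vecMulVec e₁ (star e₁)],
      ![vecMulVec e₁ (star e₁), vecMulVec e₀ (star e₀)], ?_, ?_, ?_, ?_, ?_⟩
    · intro i; fin_cases i <;> norm_num
    · simp [Fin.sum_univ_two]; norm_num
    · intro i; fin_cases i
      · exact dens_pure e₀ h0
      · exact dens_pure e₁ h1
    · intro i; fin_cases i
      · exact dens_pure e₁ h1
      · exact dens_pure e₀ h0
    · rw [neelState, Fin.sum_univ_two]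
      norm_num
  · have h10 : (∑ i, starRingEnd ℂ (e₁ i) * e₀ i) = 0 := by
      have := congrArg (starRingEnd ℂ) h01
      simpa [map_sum, mul_comm] using this
    rw [neelState, Matrix.add_mul, Matrix.smul_mul, Matrix.smul_mul,
      Matrix.trace_add, Matrix.trace_smul, Matrix.trace_smul,
      pure_cross e₀ e₁ h0 h1 h01, pure_cross e₁ e₀ h1 h0 h10]
    simp
    norm_num
end

section
/- Let 𝕡 be the 4×4 orthogonal projection onto the singlet vector (|10⟩ − |01⟩)/√2 in ℂ² ⊗ ℂ², and for λ ∈ [0,1] let ρ_λ := (1−λ)/3 · (𝟙₄ − 𝕡) + λ 𝕡. Then ρ_λ is a two-qubit density matrix, and ρ_λ is separable (a finite convex combination of Kronecker products of 2×2 density matrices) if and only if 0 ≤ λ ≤ 1/2; for 1/2 < λ ≤ 1 it is entangled. -/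
open Kronecker
open Matrix
open scoped ComplexOrder

/-- The SU(2)-invariant two-qubit (Werner) state
`ρ_λ = (1−λ)/3 · (𝟙₄ − 𝕡) + λ 𝕡`. -/
noncomputable def wernerState (lam : ℝ) : Matrix (Fin 2 × Fin 2) (Fin 2 × Fin 2) ℂ :=
  (((1 - lam) / 3 : ℝ) : ℂ) • ((1 : Matrix (Fin 2 × Fin 2) (Fin 2 × Fin 2) ℂ) - singletProj)
    + ((lam : ℝ) : ℂ) • singletProj

/-! The singlet weight `tr(𝕡 ρ)` is an entanglement witness: for single-qubit states
`tr(𝕡 (σ ⊗ τ)) = (1 - tr(σ τ)) / 2 ≤ 1 / 2` because `tr(σ τ) ≥ 0`, the bound survives convex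
combinations, and `tr(𝕡 ρ_λ) = λ`. Conversely `ρ_λ = ¼ 𝟙 + (1 - 4λ)/12 · ∑ₐ σₐ ⊗ σₐ`, and for
`λ ≤ 1/2` this is a mixture of products `(𝟙 ± σₐ)/2 ⊗ (𝟙 ± σₐ)/2` of Pauli eigenprojectors, with
weight `(1 - 2λ)/6` for equal signs and `λ/3` for opposite signs. -/

open scoped MatrixOrder in
theorem Matrix.PosSemidef.trace_mul_nonneg {n 𝕜 : Type*} [Fintype n] [DecidableEq n] [RCLike 𝕜]
    {A B : Matrix n n 𝕜} (hA : A.PosSemidef) (hB : B.PosSemidef) : 0 ≤ (A * B).trace := by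
  obtain ⟨S, hS, -, rfl⟩ := CFC.exists_sqrt_of_isSelfAdjoint_of_quasispectrumRestricts
    hB.isHermitian (QuasispectrumRestricts.nnreal_of_nonneg hB.nonneg)
  rw [← mul_assoc, trace_mul_comm, ← mul_assoc]
  simpa [← star_eq_conjTranspose, hS.star_eq] using (hA.mul_mul_conjTranspose_same S).trace_nonneg

theorem Matrix.IsHermitian.posSemidef_of_isIdempotentElem {n 𝕜 : Type*} [Fintype n] [RCLike 𝕜]
    {P : Matrix n n 𝕜} (hH : P.IsHermitian) (hP : IsIdempotentElem P) : P.PosSemidef := by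
  simpa [hH.eq, hP.eq] using posSemidef_conjTranspose_mul_self P

def pauli : Fin 3 → Matrix (Fin 2) (Fin 2) ℂ := ![pauliX, pauliY, pauliZ]

lemma pauli_isHermitian (a : Fin 3) : (pauli a).IsHermitian := by
  fin_cases a <;> ext i j <;> fin_cases i <;> fin_cases j <;>
    simp [pauli, pauliX, pauliY, pauliZ]

lemma pauli_mul_self (a : Fin 3) : pauli a * pauli a = 1 := by
  fin_cases a <;> ext i j <;> fin_cases i <;> fin_cases j <;>
    simp [pauli, pauliX, pauliY, pauliZ]

lemma trace_pauli (a : Fin 3) : (pauli a).trace = 0 := by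
  fin_cases a <;> simp [pauli, pauliX, pauliY, pauliZ, trace_fin_two]

lemma singletProj_eq_sum_pauli :
    singletProj = (1/4 : ℂ) • (1 - ∑ a, pauli a ⊗ₖ pauli a) := by
  simp [singletProj, pauli, Fin.sum_univ_three, sub_sub]

lemma singletProj_isHermitian : singletProj.IsHermitian := by
  ext ⟨i, j⟩ ⟨k, l⟩
  fin_cases i <;> fin_cases j <;> fin_cases k <;> fin_cases l <;>
    simp [singletProj, pauliX, pauliY, pauliZ, one_apply]

lemma singletProj_mul_self : singletProj * singletProj = singletProj := by
  ext ⟨i, j⟩ ⟨k, l⟩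
  fin_cases i <;> fin_cases j <;> fin_cases k <;> fin_cases l <;>
    simp [singletProj, pauliX, pauliY, pauliZ, one_apply, mul_apply, Fintype.sum_prod_type] <;>
    ring_nf

lemma trace_singletProj : singletProj.trace = 1 := by
  norm_num [singletProj, pauliX, pauliY, pauliZ, trace, Fintype.sum_prod_type]

lemma trace_singletProj_mul_kronecker (σ τ : Matrix (Fin 2) (Fin 2) ℂ) :
    (singletProj * (σ ⊗ₖ τ)).trace = (σ.trace * τ.trace - (σ * τ).trace) / 2 := by
  simp [singletProj, pauliX, pauliY, pauliZ, trace, mul_apply, one_apply, Fintype.sum_prod_type]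
  ring

lemma re_trace_singletProj_mul_kronecker_le {σ τ : Matrix (Fin 2) (Fin 2) ℂ}
    (hσ : IsDensityMatrix σ) (hτ : IsDensityMatrix τ) :
    (singletProj * (σ ⊗ₖ τ)).trace.re ≤ 1/2 := by
  have hστ : 0 ≤ (σ * τ).trace.re :=
    (Complex.nonneg_iff.mp (hσ.1.trace_mul_nonneg hτ.1)).1
  rw [trace_singletProj_mul_kronecker, hσ.2, hτ.2]
  simp only [one_mul, Complex.div_ofNat_re, Complex.sub_re, Complex.one_re]
  linarith

lemma SeparableTwoQubit.re_trace_singletProj_mul_le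
    {ρ : Matrix (Fin 2 × Fin 2) (Fin 2 × Fin 2) ℂ} (h : SeparableTwoQubit ρ) :
    (singletProj * ρ).trace.re ≤ 1/2 := by
  obtain ⟨n, c, σ, τ, hc0, hc1, hσ, hτ, rfl⟩ := h
  calc (singletProj * ∑ i, (c i : ℂ) • (σ i ⊗ₖ τ i)).trace.re
      = ∑ i, c i * (singletProj * (σ i ⊗ₖ τ i)).trace.re := by
        simp [Finset.mul_sum, trace_sum, Complex.re_sum]
    _ ≤ ∑ i, c i * (1/2) := by
        gcongr with i
        · exact hc0 i
        · exact re_trace_singletProj_mul_kronecker_le (hσ i) (hτ i)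
    _ = 1/2 := by rw [← Finset.sum_mul, hc1, one_mul]

lemma trace_singletProj_mul_wernerState (lam : ℝ) :
    (singletProj * wernerState lam).trace = lam := by
  simp only [wernerState, mul_add, mul_smul_comm, mul_sub, mul_one, singletProj_mul_self, sub_self]
  simp [trace_singletProj]

lemma isDensityMatrix_wernerState {lam : ℝ} (h0 : 0 ≤ lam) (h1 : lam ≤ 1) :
    IsDensityMatrix (wernerState lam) := by
  have hP := singletProj_isHermitian.posSemidef_of_isIdempotentElem singletProj_mul_self
  have hQ := (isHermitian_one.sub singletProj_isHermitian).posSemidef_of_isIdempotentElem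
    (IsIdempotentElem.one_sub singletProj_mul_self)
  unfold wernerState
  refine ⟨(hQ.smul ?_).add (hP.smul ?_), ?_⟩
  · exact_mod_cast (by linarith : 0 ≤ (1 - lam) / 3)
  · exact_mod_cast h0
  · simp only [trace_add, trace_smul, trace_sub, trace_one, trace_singletProj, Fintype.card_prod,
      Fintype.card_fin, smul_eq_mul]
    push_cast
    ring

lemma separableTwoQubit_of_fintype {ι : Type*} [Fintype ι]
    {ρ : Matrix (Fin 2 × Fin 2) (Fin 2 × Fin 2) ℂ} (c : ι → ℝ) (σ τ : ι → Matrix (Fin 2) (Fin 2) ℂ)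
    (hc0 : ∀ i, 0 ≤ c i) (hc1 : ∑ i, c i = 1)
    (hσ : ∀ i, IsDensityMatrix (σ i)) (hτ : ∀ i, IsDensityMatrix (τ i))
    (hρ : ρ = ∑ i, (c i : ℂ) • (σ i ⊗ₖ τ i)) : SeparableTwoQubit ρ := by
  let e := Fintype.equivFin ι
  refine ⟨Fintype.card ι, c ∘ e.symm, σ ∘ e.symm, τ ∘ e.symm, fun i => hc0 _, ?_,
    fun i => hσ _, fun i => hτ _, ?_⟩
  · simpa [Function.comp_def, e.symm.sum_comp] using hc1
  · exact hρ.trans (e.symm.sum_comp fun i => (c i : ℂ) • (σ i ⊗ₖ τ i)).symm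

noncomputable def pauliEigenproj (a : Fin 3) (s : ℝ) : Matrix (Fin 2) (Fin 2) ℂ :=
  (1/2 : ℂ) • (1 + (s : ℂ) • pauli a)

lemma isDensityMatrix_pauliEigenproj (a : Fin 3) {s : ℝ} (hs : s * s = 1) :
    IsDensityMatrix (pauliEigenproj a s) := by
  have hH : (pauliEigenproj a s).IsHermitian :=
    (isHermitian_one.add ((pauli_isHermitian a).smul (Complex.conj_ofReal s))).smul
      (by simp [isSelfAdjoint_iff])
  have hP : IsIdempotentElem (pauliEigenproj a s) := by
    simp only [IsIdempotentElem, pauliEigenproj, smul_mul_smul, mul_add, add_mul, mul_one, one_mul,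
      pauli_mul_self]
    rw [← Complex.ofReal_mul, hs, Complex.ofReal_one]
    module
  refine ⟨hH.posSemidef_of_isIdempotentElem hP, ?_⟩
  simp [pauliEigenproj, trace_pauli]

def pauliSign : Fin 2 → ℝ := ![1, -1]

lemma pauliSign_mul_self (s : Fin 2) : pauliSign s * pauliSign s = 1 := by
  fin_cases s <;> simp [pauliSign]

noncomputable def wernerWeight (lam : ℝ) (s t : Fin 2) : ℝ :=
  if s = t then (1 - 2 * lam) / 6 else lam / 3

lemma sum_wernerWeight_smul_kronecker_pauliEigenproj (lam : ℝ) (a : Fin 3) :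
    ∑ s, ∑ t, (wernerWeight lam s t : ℂ) •
        (pauliEigenproj a (pauliSign s) ⊗ₖ pauliEigenproj a (pauliSign t)) =
      (1/12 : ℂ) • 1 + (((1 - 4 * lam) / 12 : ℝ) : ℂ) • (pauli a ⊗ₖ pauli a) := by
  simp only [Fin.sum_univ_two, wernerWeight, pauliSign, pauliEigenproj, add_kronecker,
    kronecker_add, smul_kronecker, kronecker_smul, one_kronecker_one]
  simp only [Fin.isValue, cons_val_zero, cons_val_one, cons_val_fin_one, ↓reduceIte,
    zero_ne_one, one_ne_zero]
  push_cast
  module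

lemma wernerState_eq_sum_pauli (lam : ℝ) :
    wernerState lam =
      ∑ a, ((1/12 : ℂ) • 1 + (((1 - 4 * lam) / 12 : ℝ) : ℂ) • (pauli a ⊗ₖ pauli a)) := by
  rw [wernerState, singletProj_eq_sum_pauli, Finset.sum_add_distrib, Finset.sum_const,
    Finset.card_univ, Fintype.card_fin, ← Finset.smul_sum]
  push_cast
  module

lemma separableTwoQubit_wernerState {lam : ℝ} (h0 : 0 ≤ lam) (h1 : lam ≤ 1/2) :
    SeparableTwoQubit (wernerState lam) := by
  refine separableTwoQubit_of_fintype (ι := Fin 3 × Fin 2 × Fin 2)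
    (fun i => wernerWeight lam i.2.1 i.2.2) (fun i => pauliEigenproj i.1 (pauliSign i.2.1))
    (fun i => pauliEigenproj i.1 (pauliSign i.2.2)) ?_ ?_ ?_ ?_ ?_
  · rintro ⟨-, s, t⟩
    unfold wernerWeight
    split_ifs <;> linarith
  · simp only [wernerWeight, Fintype.sum_prod_type, Fin.sum_univ_two, ↓reduceIte, zero_ne_one,
      one_ne_zero, Finset.sum_const, Finset.card_univ, Fintype.card_fin, nsmul_eq_mul]
    ring
  · rintro ⟨a, s, -⟩
    exact isDensityMatrix_pauliEigenproj a (pauliSign_mul_self s)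
  · rintro ⟨a, -, t⟩
    exact isDensityMatrix_pauliEigenproj a (pauliSign_mul_self t)
  · simp only [Fintype.sum_prod_type, sum_wernerWeight_smul_kronecker_pauliEigenproj]
    exact wernerState_eq_sum_pauli lam

/-- For `λ ∈ [0,1]`, the state `ρ_λ = (1−λ)/3 (𝟙 − 𝕡) + λ 𝕡` is a two-qubit
density matrix, and it is separable if and only if `λ ≤ 1/2` (entangled for `1/2 < λ ≤ 1`). -/
theorem werner_separable_iff (lam : ℝ) (hlam : lam ∈ Set.Icc (0 : ℝ) 1) :
    IsDensityMatrix (wernerState lam) ∧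
    (SeparableTwoQubit (wernerState lam) ↔ lam ≤ 1/2) := by
  obtain ⟨h0, h1⟩ := hlam
  refine ⟨isDensityMatrix_wernerState h0 h1, fun hsep => ?_, separableTwoQubit_wernerState h0⟩
  simpa [trace_singletProj_mul_wernerState] using hsep.re_trace_singletProj_mul_le
end

section
/- Let 𝕡 be the 4×4 orthogonal projection onto the singlet vector (|10⟩ − |01⟩)/√2 in ℂ² ⊗ ℂ². If ρ is a two-qubit density matrix that is SU(2)-invariant, i.e., (U ⊗ U) ρ (U ⊗ U)* = ρ for every U in the special unitary group SU(2), then there exists λ ∈ [0,1] such that ρ = (1−λ)/3 · (𝟙₄ − 𝕡) + λ 𝕡. -/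
/-!
The matrices commuting with every `U ⊗ U`, `U ∈ SU(2)`, are the combinations of `𝟙` and the swap
of the two qubits, i.e. of `𝟙 - 𝕡` and `𝕡`. Three elements of `SU(2)` already force this:
`U = diag(z, z̄)` with `z = (3 + 4i)/5` gives `U ⊗ U = diag(z², 1, 1, z̄²)`, whose distinct
eigenvalues kill every entry of `ρ` outside the support of `𝟙` and the swap; `[[0, -1], [1, 0]]`
identifies the entries exchanged by flipping both qubits; and the rotation
`[[3/5, -4/5], [4/5, 3/5]]` ties `ρ₀₀,₀₀` to the two remaining parameters.
Writing `ρ = α (𝟙 - 𝕡) + μ 𝕡`, the trace gives `3α + μ = 1`, and positivity of `ρ` at `|00⟩` and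
at the singlet vector gives `α, μ ≥ 0`; then `λ = μ`.
-/

open Kronecker
open Matrix
open scoped ComplexOrder

lemma Matrix.PosSemidef.nonneg_of_mulVec_eq_smul {n 𝕜 : Type*} [Fintype n] [RCLike 𝕜]
    {A : Matrix n n 𝕜} (hA : A.PosSemidef) {v : n → 𝕜} (hv : v ≠ 0) {μ : 𝕜}
    (h : A *ᵥ v = μ • v) : 0 ≤ μ := by
  have hquad := hA.dotProduct_mulVec_nonneg v
  rw [h, dotProduct_smul, smul_eq_mul] at hquad
  have hnorm : 0 < star v ⬝ᵥ v := dotProduct_star_self_pos_iff.mpr hv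
  simpa [mul_assoc, hnorm.ne'] using mul_nonneg hquad (inv_nonneg.mpr hnorm.le)

lemma Matrix.apply_eq_zero_of_commute_diagonal {n R : Type*} [Fintype n] [DecidableEq n]
    [CommRing R] [NoZeroDivisors R] {d : n → R} {A : Matrix n n R}
    (h : Commute (diagonal d) A) {i j : n} (hij : d i ≠ d j) : A i j = 0 := by
  have hij' := congr_fun (congr_fun h.eq i) j
  rw [diagonal_mul, mul_diagonal] at hij'
  exact (mul_eq_zero.mp (by linear_combination hij' : (d i - d j) * A i j = 0)).resolve_left
    (sub_ne_zero.mpr hij)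

lemma Matrix.of_mem_specialUnitaryGroup_fin_two {R : Type*} [CommRing R] [StarRing R] {a b : R}
    (h : star a * a + star b * b = 1) :
    !![a, -star b; b, star a] ∈ specialUnitaryGroup (Fin 2) R := by
  rw [mem_specialUnitaryGroup_iff, mem_unitaryGroup_iff]
  refine ⟨?_, by simpa [det_fin_two_of, mul_comm] using h⟩
  ext i j
  fin_cases i <;> fin_cases j <;> simp [mul_apply, Fin.sum_univ_two] <;>
    first | ring1 | linear_combination h

lemma singletProj_apply (i j : Fin 2 × Fin 2) :
    singletProj i j = ((if i = j then 1 else 0) - (if i = j.swap then 1 else 0)) / 2 := by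
  obtain ⟨a, b⟩ := i
  obtain ⟨c, d⟩ := j
  fin_cases a <;> fin_cases b <;> fin_cases c <;> fin_cases d <;>
    simp [singletProj, pauliX, pauliY, pauliZ, one_apply] <;> ring_nf

def singletVec : Fin 2 × Fin 2 → ℂ := Pi.single (0, 1) 1 - Pi.single (1, 0) 1

lemma singletVec_ne_zero : singletVec ≠ 0 := fun h => by
  simpa [singletVec] using congr_fun h (0, 1)

lemma singletProj_mulVec_singletVec : singletProj *ᵥ singletVec = singletVec := by
  ext ⟨a, b⟩
  fin_cases a <;> fin_cases b <;>
    simp [singletVec, mulVec, dotProduct, singletProj_apply, Fintype.sum_prod_type] <;> norm_num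

lemma apply_eq_zero_of_forall_commute_kronecker_self
    {ρ : Matrix (Fin 2 × Fin 2) (Fin 2 × Fin 2) ℂ}
    (h : ∀ U ∈ specialUnitaryGroup (Fin 2) ℂ, Commute (U ⊗ₖ U) ρ)
    {i j : Fin 2 × Fin 2} (hij : i ≠ j) (hij' : i ≠ j.swap) : ρ i j = 0 := by
  set z : ℂ := (3 + 4 * Complex.I) / 5
  have hz : star z * z = 1 := by norm_num [z, Complex.ext_iff]
  have hD := h _ (of_mem_specialUnitaryGroup_fin_two (b := 0) (by simpa using hz))
  rw [star_zero, neg_zero, show !![z, 0; 0, star z] = diagonal ![z, star z] from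
    (diagonal_fin_two ![z, star z]).symm, diagonal_kronecker_diagonal] at hD
  refine apply_eq_zero_of_commute_diagonal hD fun e => ?_
  replace e := congr_arg Complex.im e
  obtain ⟨a, b⟩ := i
  obtain ⟨c, d⟩ := j
  fin_cases a <;> fin_cases b <;> fin_cases c <;> fin_cases d <;>
    simp [z] at hij hij' e <;> norm_num at e

theorem exists_eq_smul_one_sub_singletProj_add_smul_singletProj
    {ρ : Matrix (Fin 2 × Fin 2) (Fin 2 × Fin 2) ℂ}
    (h : ∀ U ∈ specialUnitaryGroup (Fin 2) ℂ, Commute (U ⊗ₖ U) ρ) :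
    ∃ α μ : ℂ, ρ = α • (1 - singletProj) + μ • singletProj := by
  have hoff {i j : Fin 2 × Fin 2} (hij : i ≠ j) (hij' : i ≠ j.swap) : ρ i j = 0 :=
    apply_eq_zero_of_forall_commute_kronecker_self h hij hij'
  have hW := (h _ (of_mem_specialUnitaryGroup_fin_two (a := 0) (b := 1) (by simp))).eq
  have hR := (h _ (of_mem_specialUnitaryGroup_fin_two (a := 3/5) (b := 4/5) (by norm_num))).eq
  have hflip₀₀ := congr_fun (congr_fun hW (0, 0)) (1, 1)
  have hflip₀₁ := congr_fun (congr_fun hW (0, 1)) (1, 0)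
  have hflip_swap := congr_fun (congr_fun hW (0, 1)) (0, 1)
  have hR₀₀₀₁ := congr_fun (congr_fun hR (0, 0)) (0, 1)
  simp only [star_one, star_zero, Fin.isValue, mul_apply, kroneckerMap_apply, of_apply, cons_val',
    cons_val_fin_one, cons_val_zero, Fintype.sum_prod_type, Fin.sum_univ_two, mul_zero, zero_mul,
    cons_val_one, mul_neg, mul_one, neg_mul, zero_add, Finset.sum_neg_distrib, one_mul, neg_neg,
    add_zero, neg_inj, star_div₀, star_ofNat] at hflip₀₀ hflip₀₁ hflip_swap hR₀₀₀₁
  have hrot : ρ (0, 0) (0, 0) = ρ (0, 1) (0, 1) + ρ (0, 1) (1, 0) := by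
    linear_combination (25/12 : ℂ) * hR₀₀₀₁ + hflip_swap
      - (4/3 : ℂ) * hoff (i := (1, 1)) (j := (0, 1)) (by decide) (by decide)
      - (4/3 : ℂ) * hoff (i := (0, 0)) (j := (1, 0)) (by decide) (by decide)
      + hoff (i := (0, 0)) (j := (1, 1)) (by decide) (by decide)
  refine ⟨ρ (0, 0) (0, 0), ρ (0, 1) (0, 1) - ρ (0, 1) (1, 0), ?_⟩
  ext ⟨a, b⟩ ⟨c, e⟩
  fin_cases a <;> fin_cases b <;> fin_cases c <;> fin_cases e <;>
    simp [singletProj_apply, hflip₀₀, hflip₀₁, hflip_swap, hrot] <;>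
    first | exact hoff (by decide) (by decide) | ring

/-- Every SU(2)-invariant two-qubit density matrix is of the form
`(1−λ)/3 · (𝟙₄ − 𝕡) + λ 𝕡` for some `λ ∈ [0,1]`. -/
theorem su2_invariant_two_qubit_state (ρ : Matrix (Fin 2 × Fin 2) (Fin 2 × Fin 2) ℂ)
    (hpsd : ρ.PosSemidef) (htr : ρ.trace = 1)
    (hinv : ∀ U : Matrix (Fin 2) (Fin 2) ℂ, U * Uᴴ = 1 → U.det = 1 →
      (U ⊗ₖ U) * ρ * (U ⊗ₖ U)ᴴ = ρ) :
    ∃ lam : ℝ, lam ∈ Set.Icc (0 : ℝ) 1 ∧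
      ρ = (((1 - lam) / 3 : ℝ) : ℂ) •
            ((1 : Matrix (Fin 2 × Fin 2) (Fin 2 × Fin 2) ℂ) - singletProj)
          + ((lam : ℝ) : ℂ) • singletProj := by
  obtain ⟨α, μ, rfl⟩ := exists_eq_smul_one_sub_singletProj_add_smul_singletProj fun U hU => by
    obtain ⟨hU, hdet⟩ := mem_specialUnitaryGroup_iff.mp hU
    exact (commute_unitary_iff_star_right_conjugate (kronecker_mem_unitary hU hU)).mpr
      (hinv U (mem_unitaryGroup_iff.mp hU) hdet)
  have hα : 0 ≤ α := by simpa [singletProj_apply] using hpsd.diag_nonneg (i := (0, 0))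
  have hμ : 0 ≤ μ := hpsd.nonneg_of_mulVec_eq_smul singletVec_ne_zero <| by
    rw [add_mulVec, smul_mulVec, smul_mulVec, sub_mulVec, one_mulVec, singletProj_mulVec_singletVec,
      sub_self, smul_zero, zero_add]
  have htrace : 3 * α + μ = 1 := by
    rw [← htr, trace_add, trace_smul, trace_smul, trace_sub, trace_one, trace_singletProj]
    norm_num [mul_comm]
  obtain ⟨lam, rfl⟩ : ∃ lam : ℝ, (lam : ℂ) = μ :=
    ⟨μ.re, (Complex.eq_re_of_ofReal_le (by rwa [Complex.ofReal_zero])).symm⟩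
  have hα_eq : α = (((1 - lam) / 3 : ℝ) : ℂ) := by
    push_cast
    linear_combination htrace / 3
  rw [hα_eq, Complex.zero_le_real] at hα
  exact ⟨lam, ⟨Complex.zero_le_real.mp hμ, by linarith⟩, by rw [hα_eq]⟩
end

section
/- For all real numbers α, μ, η satisfying |6μ − α| ≤ 3 and 3 − 2α − α² + 12μ − 12αμ − 9η² ≥ 0, one has (1 − αμ)/4 ≤ 11/32. Moreover the value 11/32 is attained: α = −3/2, μ = 1/4, η = 0 satisfy both constraints and give (1 − αμ)/4 = 11/32. -/
/-- Within the complete-positivity region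
`|6μ − α| ≤ 3` and `3 − 2α − α² + 12μ − 12αμ − 9η² ≥ 0` for SU(2)-covariant maps,
the singlet expectation `(1 − αμ)/4` is at most `11/32`, and the bound is attained at
`α = −3/2`, `μ = 1/4`, `η = 0`. -/
theorem singlet_bound_su2_process :
    (∀ α μ η : ℝ, |6 * μ - α| ≤ 3 →
      3 - 2 * α - α ^ 2 + 12 * μ - 12 * α * μ - 9 * η ^ 2 ≥ 0 →
      (1 - α * μ) / 4 ≤ 11 / 32) ∧
    (|6 * (1/4 : ℝ) - (-(3/2))| ≤ 3 ∧
      3 - 2 * (-(3/2) : ℝ) - (-(3/2) : ℝ) ^ 2 + 12 * (1/4) - 12 * (-(3/2)) * (1/4)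
        - 9 * (0 : ℝ) ^ 2 ≥ 0 ∧
      (1 - (-(3/2) : ℝ) * (1/4)) / 4 = 11 / 32) := by
  refine ⟨fun α μ η h1 h2 => ?_, by norm_num [abs_le], by norm_num, by norm_num⟩
  rw [abs_le] at h1
  nlinarith [sq_nonneg η, sq_nonneg (6*μ - α + 3), sq_nonneg (6*μ - α - 3),
    sq_nonneg (α + 3/2), sq_nonneg (μ - 1/4), sq_nonneg (2*α + 3),
    sq_nonneg (6*μ + α), sq_nonneg (4*μ - 1), sq_nonneg (α + 6*μ + 3)]
end

section
/- Let T be a d×d stochastic matrix (nonnegative entries, rows summing to 1) and D a real symmetric d×d matrix with D_{ii} arbitrary (only off-diagonal entries used). Define the Davies map Γ : M_d(ℂ) → M_d(ℂ) by Γ(E_{jj}) = Σ_i T_{ij} E_{ii} for each j (equivalently Γ(dia(φ)) = dia(Tφ)) and Γ(E_{ij}) = D_{ij} E_{ij} for i ≠ j, where E_{ij} are the matrix units. Then Γ is completely positive (equivalently, its Choi matrix Σ_{i,j} E_{ij} ⊗ Γ(E_{ij}) is positive semidefinite) if and only if the d×d Hermitian matrix M with M_{ii} = T_{ii} and M_{ij}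 = D_{ij} for i ≠ j is positive semidefinite. -/
open Kronecker
open Matrix
open scoped ComplexOrder

/-- The Davies map determined by a stochastic matrix `T` (acting on the diagonal) and a
decoherence matrix `D` (damping the off-diagonal entries):
`Γ(M)_{ii} = Σ_j T_{ij} M_{jj}` and `Γ(M)_{ij} = D_{ij} M_{ij}` for `i ≠ j`,
so that `Γ(E_{jj}) = Σ_i T_{ij} E_{ii}` and `Γ(E_{ij}) = D_{ij} E_{ij}` for `i ≠ j`. -/
noncomputable def daviesMap {d : ℕ} (T D : Matrix (Fin d) (Fin d) ℝ)
    (M : Matrix (Fin d) (Fin d) ℂ) : Matrix (Fin d) (Fin d) ℂ :=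
  fun i j => if i = j then ∑ k, (T i k : ℂ) * M k k else (D i j : ℂ) * M i j

/-- The Choi–Jamiołkowski matrix of the Davies map:
`C(Γ) = Σ_{i,j} E_{ij} ⊗ Γ(E_{ij})`. -/
noncomputable def daviesChoi {d : ℕ} (T D : Matrix (Fin d) (Fin d) ℝ) :
    Matrix (Fin d × Fin d) (Fin d × Fin d) ℂ :=
  ∑ i : Fin d, ∑ j : Fin d,
    (Matrix.single i j (1 : ℂ)) ⊗ₖ daviesMap T D (Matrix.single i j (1 : ℂ))

/-! The Choi matrix couples the vectors `e_i ⊗ e_i` only among themselves, and on their span it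
is the matrix `M`; on each remaining vector `e_i ⊗ e_j` (`i ≠ j`) it acts as multiplication by
`T_{ji} ≥ 0`. So it is the orthogonal direct sum of `M` and a nonnegative diagonal matrix. -/

noncomputable def daviesCoherenceMatrix {d : ℕ} (T D : Matrix (Fin d) (Fin d) ℝ) :
    Matrix (Fin d) (Fin d) ℂ :=
  fun i j => if i = j then (T i i : ℂ) else (D i j : ℂ)

lemma daviesChoi_apply {d : ℕ} (T D : Matrix (Fin d) (Fin d) ℝ) (a b c e : Fin d) :
    daviesChoi T D (a, b) (c, e) = daviesMap T D (single a c 1) b e := by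
  simp [daviesChoi, Matrix.sum_apply, single_apply, ite_and]

lemma daviesMap_single_apply {d : ℕ} (T D : Matrix (Fin d) (Fin d) ℝ) (a b c e : Fin d) :
    daviesMap T D (single a c 1) b e =
      if b = e then (if a = c then (T b a : ℂ) else 0)
      else (if a = b ∧ c = e then (D b e : ℂ) else 0) := by
  unfold daviesMap
  rcases eq_or_ne b e with rfl | hbe
  · rcases eq_or_ne a c with rfl | hac
    · simp [single_apply]
    · rw [if_pos rfl, if_pos rfl, if_neg hac]
      exact Finset.sum_eq_zero fun k _ =>
        mul_eq_zero_of_right _ (single_apply_of_ne _ _ _ _ _ fun h => hac (h.1.trans h.2.symm))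
  · simp [hbe, single_apply]

lemma daviesChoi_submatrix_diag {d : ℕ} (T D : Matrix (Fin d) (Fin d) ℝ) :
    (daviesChoi T D).submatrix (fun i => (i, i)) (fun i => (i, i)) =
      daviesCoherenceMatrix T D := by
  ext a c
  simp only [submatrix_apply, daviesChoi_apply, daviesMap_single_apply, daviesCoherenceMatrix]
  split_ifs <;> grind

def diagEmbedding (n R : Type*) [DecidableEq n] [Zero R] [One R] : Matrix n (n × n) R :=
  of fun i p => if p = (i, i) then 1 else 0

lemma diagEmbedding_apply_of_ne {n R : Type*} [DecidableEq n] [Zero R] [One R] {i a b : n}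
    (hab : a ≠ b) : diagEmbedding n R i (a, b) = 0 :=
  if_neg fun h => hab (by simp_all)

lemma conjTranspose_diagEmbedding_mul_mul_apply {n R : Type*} [Fintype n] [DecidableEq n]
    [Semiring R] [StarRing R] (A : Matrix n n R) (a b c e : n) :
    ((diagEmbedding n R)ᴴ * A * diagEmbedding n R) (a, b) (c, e) =
      if a = b ∧ c = e then A a c else 0 := by
  by_cases hab : a = b
  · by_cases hce : c = e
    · subst hab hce
      simp [mul_apply, diagEmbedding, apply_ite star]
    · simp [mul_apply, diagEmbedding_apply_of_ne hce, hce]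
  · simp [mul_apply, diagEmbedding_apply_of_ne hab, hab]

lemma daviesChoi_eq_conjTranspose_mul_mul_add_diagonal {d : ℕ} (T D : Matrix (Fin d) (Fin d) ℝ) :
    daviesChoi T D =
      (diagEmbedding (Fin d) ℂ)ᴴ * daviesCoherenceMatrix T D * diagEmbedding (Fin d) ℂ
        + diagonal (fun p => if p.1 = p.2 then 0 else (T p.2 p.1 : ℂ)) := by
  ext ⟨a, b⟩ ⟨c, e⟩
  rw [Matrix.add_apply, conjTranspose_diagEmbedding_mul_mul_apply, daviesChoi_apply,
    daviesMap_single_apply, diagonal_apply]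
  simp only [daviesCoherenceMatrix, Prod.mk.injEq]
  split_ifs <;> grind

theorem davies_cp_iff_general (d : ℕ) (T D : Matrix (Fin d) (Fin d) ℝ)
    (hT0 : ∀ i j, 0 ≤ T i j) :
    (daviesChoi T D).PosSemidef ↔
      (Matrix.PosSemidef
        (fun i j => if i = j then (T i i : ℂ) else (D i j : ℂ) :
          Matrix (Fin d) (Fin d) ℂ)) := by
  change _ ↔ (daviesCoherenceMatrix T D).PosSemidef
  refine ⟨fun hC => daviesChoi_submatrix_diag T D ▸ hC.submatrix _, fun hM => ?_⟩
  rw [daviesChoi_eq_conjTranspose_mul_mul_add_diagonal]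
  refine (hM.conjTranspose_mul_mul_same _).add (posSemidef_diagonal_iff.2 fun p => ?_)
  split_ifs
  · exact le_rfl
  · exact_mod_cast hT0 _ _

/-- The Davies map built from a stochastic matrix `T` and a real symmetric
decoherence matrix `D` is completely positive (its Choi matrix is positive semidefinite)
if and only if the Hermitian matrix with diagonal `T_{ii}` and off-diagonal `D_{ij}` is
positive semidefinite. -/
theorem davies_cp_iff (d : ℕ) (T D : Matrix (Fin d) (Fin d) ℝ)
    (hT0 : ∀ i j, 0 ≤ T i j) (hT1 : ∀ i, ∑ j, T i j = 1) (hD : Dᵀ = D) :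
    (daviesChoi T D).PosSemidef ↔
      (Matrix.PosSemidef
        (fun i j => if i = j then (T i i : ℂ) else (D i j : ℂ) :
          Matrix (Fin d) (Fin d) ℂ)) :=
  davies_cp_iff_general d T D hT0
end
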